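/- arXiv:0804.4565 — 7 statements merged into one kernel-verified Lean document; each statement's English description precedes it below -/
import Mathlib

section
/- For all closed terms over the signature of data linkage algebra (DLA), there exists a basic term (one built only from the atomic constants s=a, a/f, a.f=b, a:n, the empty data linkage ∅, and the combination operator ⊕) that is provably equal to it using the axioms of DLA. -/
/-- Terms over the signature of data linkage algebra (DLA). -/
inductive DLATerm (S F A V : Type) : Type where
  | sl : S → A → DLATerm S F A V              -- spot link  s = a
  | pf : A → F → DLATerm S F A V              -- partial field link  a / f
  | fl : A → F → A → DLATerm S F A V          -- field link  a . f = b
  | va : A → V → DLATerm S F A V              -- value association  a : n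
  | emp : DLATerm S F A V                      -- empty data linkage ∅
  | comb : DLATerm S F A V → DLATerm S F A V → DLATerm S F A V  -- ⊕
  | ovr : DLATerm S F A V → DLATerm S F A V → DLATerm S F A V   -- ⊘

namespace DLATerm

variable {S F A V : Type}

/-- Derivable equality from the axioms of DLA (Table 1). -/
inductive Eq : DLATerm S F A V → DLATerm S F A V → Prop where
  -- equational logic
  | refl (X) : Eq X X
  | symm {X Y} : Eq X Y → Eq Y X
  | trans {X Y Z} : Eq X Y → Eq Y Z → Eq X Z
  | comb_congr {X X' Y Y'} : Eq X X' → Eq Y Y' → Eq (comb X Y) (comb X' Y')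
  | ovr_congr {X X' Y Y'} : Eq X X' → Eq Y Y' → Eq (ovr X Y) (ovr X' Y')
  -- ⊕ is commutative, associative, idempotent with identity ∅
  | comb_comm (X Y) : Eq (comb X Y) (comb Y X)
  | comb_assoc (X Y Z) : Eq (comb X (comb Y Z)) (comb (comb X Y) Z)
  | comb_idem (X) : Eq (comb X X) X
  | comb_emp (X) : Eq (comb X emp) X
  -- ∅ is identity for ⊘, and ⊘ distributes over ⊕ on the right
  | emp_ovr (X) : Eq (ovr emp X) X
  | ovr_emp (X) : Eq (ovr X emp) X
  | ovr_distrib (X Y Z) : Eq (ovr X (comb Y Z)) (comb (ovr X Y) (ovr X Z))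
  -- overriding laws
  | ovr_sl_sl (X s a b) : Eq (ovr (comb X (sl s a)) (sl s b)) (ovr X (sl s b))
  | ovr_pf_pf (X a f) : Eq (ovr (comb X (pf a f)) (pf a f)) (ovr X (pf a f))
  | ovr_fl_pf (X a f b) : Eq (ovr (comb X (fl a f b)) (pf a f)) (ovr X (pf a f))
  | ovr_pf_fl (X a f b) : Eq (ovr (comb X (pf a f)) (fl a f b)) (ovr X (fl a f b))
  | ovr_fl_fl (X a f b c) : Eq (ovr (comb X (fl a f b)) (fl a f c)) (ovr X (fl a f c))
  | ovr_va_va (X a n m) : Eq (ovr (comb X (va a n)) (va a m)) (ovr X (va a m))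
  -- commutation laws for non-interfering atomic data linkages
  | comm_sl_sl (X s t a b) (h : s ≠ t) :
      Eq (ovr (comb X (sl s a)) (sl t b)) (comb (ovr X (sl t b)) (sl s a))
  | comm_pf_sl (X a f s b) :
      Eq (ovr (comb X (pf a f)) (sl s b)) (comb (ovr X (sl s b)) (pf a f))
  | comm_fl_sl (X a f b s c) :
      Eq (ovr (comb X (fl a f b)) (sl s c)) (comb (ovr X (sl s c)) (fl a f b))
  | comm_va_sl (X a n s b) :
      Eq (ovr (comb X (va a n)) (sl s b)) (comb (ovr X (sl s b)) (va a n))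
  | comm_sl_pf (X s a b f) :
      Eq (ovr (comb X (sl s a)) (pf b f)) (comb (ovr X (pf b f)) (sl s a))
  | comm_pf_pf (X a f b g) (h : a ≠ b ∨ f ≠ g) :
      Eq (ovr (comb X (pf a f)) (pf b g)) (comb (ovr X (pf b g)) (pf a f))
  | comm_fl_pf (X a f b c g) (h : a ≠ c ∨ f ≠ g) :
      Eq (ovr (comb X (fl a f b)) (pf c g)) (comb (ovr X (pf c g)) (fl a f b))
  | comm_va_pf (X a n b f) :
      Eq (ovr (comb X (va a n)) (pf b f)) (comb (ovr X (pf b f)) (va a n))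
  | comm_sl_fl (X s a b f c) :
      Eq (ovr (comb X (sl s a)) (fl b f c)) (comb (ovr X (fl b f c)) (sl s a))
  | comm_pf_fl (X a f b g c) (h : a ≠ b ∨ f ≠ g) :
      Eq (ovr (comb X (pf a f)) (fl b g c)) (comb (ovr X (fl b g c)) (pf a f))
  | comm_fl_fl (X a f b c g d) (h : a ≠ c ∨ f ≠ g) :
      Eq (ovr (comb X (fl a f b)) (fl c g d)) (comb (ovr X (fl c g d)) (fl a f b))
  | comm_va_fl (X a n b f c) :
      Eq (ovr (comb X (va a n)) (fl b f c)) (comb (ovr X (fl b f c)) (va a n))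
  | comm_sl_va (X s a b n) :
      Eq (ovr (comb X (sl s a)) (va b n)) (comb (ovr X (va b n)) (sl s a))
  | comm_pf_va (X a f b n) :
      Eq (ovr (comb X (pf a f)) (va b n)) (comb (ovr X (va b n)) (pf a f))
  | comm_fl_va (X a f b c n) :
      Eq (ovr (comb X (fl a f b)) (va c n)) (comb (ovr X (va c n)) (fl a f b))
  | comm_va_va (X a n b m) (h : a ≠ b) :
      Eq (ovr (comb X (va a n)) (va b m)) (comb (ovr X (va b m)) (va a n))

/-- Basic terms: terms in which the overriding combination operator ⊘ does not
occur. -/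
def Basic : DLATerm S F A V → Prop
  | sl _ _ => True
  | pf _ _ => True
  | fl _ _ _ => True
  | va _ _ => True
  | emp => True
  | comb X Y => Basic X ∧ Basic Y
  | ovr _ _ => False

/-! Overriding is pushed inward. Right distributivity reduces `X ⊘ Y`, for basic `X` and `Y`,
to overridings `X ⊘ v` by atoms `v`. Writing `X` as `(∅ ⊕ u₁) ⊕ … ⊕ uₖ`, each atom `uᵢ` is
either cancelled by `v` (an overriding law) or commutes out of the overriding (a commutation
law), until only `∅ ⊘ v = v` is left. -/

def IsAtom : DLATerm S F A V → Prop
  | sl _ _ | pf _ _ | fl _ _ _ | va _ _ => True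
  | _ => False

theorem IsAtom.basic {u : DLATerm S F A V} (hu : IsAtom u) : Basic u := by
  cases u <;> trivial

def HasBasicForm (X : DLATerm S F A V) : Prop :=
  ∃ B, Basic B ∧ Eq X B

theorem Basic.hasBasicForm {X : DLATerm S F A V} (hX : Basic X) : HasBasicForm X :=
  ⟨X, hX, .refl X⟩

theorem HasBasicForm.of_eq {X Y : DLATerm S F A V} (hXY : Eq X Y) (hY : HasBasicForm Y) :
    HasBasicForm X :=
  let ⟨B, hB, hYB⟩ := hY
  ⟨B, hB, hXY.trans hYB⟩

theorem HasBasicForm.comb {X Y : DLATerm S F A V} (hX : HasBasicForm X)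
    (hY : HasBasicForm Y) : HasBasicForm (comb X Y) :=
  let ⟨B, hB, hXB⟩ := hX
  let ⟨C, hC, hYC⟩ := hY
  ⟨B.comb C, ⟨hB, hC⟩, .comb_congr hXB hYC⟩

/-- The first case occurs exactly when `v` redefines the spot, field or value that `u` defines. -/
theorem ovr_comb_atom_atom (X : DLATerm S F A V) {u v : DLATerm S F A V} (hu : IsAtom u)
    (hv : IsAtom v) :
    Eq (ovr (comb X u) v) (ovr X v) ∨ Eq (ovr (comb X u) v) (comb (ovr X v) u) := by
  cases u <;> cases v <;> (try exact hu.elim) <;> (try exact hv.elim)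
  case sl.sl s a t b =>
    by_cases h : s = t
    · subst h; exact .inl (.ovr_sl_sl ..)
    · exact .inr (.comm_sl_sl _ _ _ _ _ h)
  case pf.pf a f b g =>
    by_cases h : a = b ∧ f = g
    · obtain ⟨rfl, rfl⟩ := h; exact .inl (.ovr_pf_pf ..)
    · exact .inr (.comm_pf_pf _ _ _ _ _ (not_and_or.mp h))
  case pf.fl a f b g c =>
    by_cases h : a = b ∧ f = g
    · obtain ⟨rfl, rfl⟩ := h; exact .inl (.ovr_pf_fl ..)
    · exact .inr (.comm_pf_fl _ _ _ _ _ _ (not_and_or.mp h))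
  case fl.pf a f b c g =>
    by_cases h : a = c ∧ f = g
    · obtain ⟨rfl, rfl⟩ := h; exact .inl (.ovr_fl_pf ..)
    · exact .inr (.comm_fl_pf _ _ _ _ _ _ (not_and_or.mp h))
  case fl.fl a f b c g d =>
    by_cases h : a = c ∧ f = g
    · obtain ⟨rfl, rfl⟩ := h; exact .inl (.ovr_fl_fl ..)
    · exact .inr (.comm_fl_fl _ _ _ _ _ _ _ (not_and_or.mp h))
  case va.va a n b m =>
    by_cases h : a = b
    · subst h; exact .inl (.ovr_va_va ..)
    · exact .inr (.comm_va_va _ _ _ _ _ h)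
  all_goals refine .inr ?_; first
    | exact .comm_sl_pf .. | exact .comm_sl_fl .. | exact .comm_sl_va ..
    | exact .comm_pf_sl .. | exact .comm_pf_va .. | exact .comm_fl_sl ..
    | exact .comm_fl_va .. | exact .comm_va_sl .. | exact .comm_va_pf ..
    | exact .comm_va_fl ..

theorem HasBasicForm.ovr_comb_atom {X u v : DLATerm S F A V} (hu : IsAtom u) (hv : IsAtom v)
    (hXv : HasBasicForm (ovr X v)) : HasBasicForm (ovr (X.comb u) v) := by
  rcases ovr_comb_atom_atom X hu hv with hdiscard | hcommute
  · exact hXv.of_eq hdiscard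
  · exact (hXv.comb hu.basic.hasBasicForm).of_eq hcommute

/-- The induction on `Z` reassociates `X ⊕ (Z₁ ⊕ Z₂)` to `(X ⊕ Z₁) ⊕ Z₂`, so that atoms are
peeled off one at a time. -/
theorem hasBasicForm_ovr_comb_basic {X Z : DLATerm S F A V}
    (hX : ∀ v, IsAtom v → HasBasicForm (ovr X v)) (hZ : Basic Z) :
    ∀ v, IsAtom v → HasBasicForm (ovr (comb X Z) v) := by
  induction Z generalizing X with
  | emp => exact fun v hv => (hX v hv).of_eq (.ovr_congr (.comb_emp X) (.refl v))
  | comb Z₁ Z₂ ih₁ ih₂ =>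
    intro v hv
    refine (ih₂ (ih₁ hX hZ.1) hZ.2 v hv).of_eq ?_
    exact .ovr_congr (.comb_assoc X Z₁ Z₂) (.refl v)
  | ovr => exact hZ.elim
  | _ => exact fun v hv => (hX v hv).ovr_comb_atom (by trivial) hv

theorem Basic.hasBasicForm_ovr_atom {X v : DLATerm S F A V} (hX : Basic X) (hv : IsAtom v) :
    HasBasicForm (ovr X v) := by
  have hemp : ∀ v, IsAtom v → HasBasicForm (ovr (emp : DLATerm S F A V) v) :=
    fun v hv => hv.basic.hasBasicForm.of_eq (.emp_ovr v)
  have hX_eq : Eq X (comb emp X) := .symm ((Eq.comb_comm emp X).trans (.comb_emp X))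
  exact (hasBasicForm_ovr_comb_basic hemp hX v hv).of_eq (.ovr_congr hX_eq (.refl v))

theorem Basic.hasBasicForm_ovr {X Y : DLATerm S F A V} (hX : Basic X) (hY : Basic Y) :
    HasBasicForm (ovr X Y) := by
  induction Y with
  | emp => exact hX.hasBasicForm.of_eq (.ovr_emp X)
  | comb Y₁ Y₂ ih₁ ih₂ => exact ((ih₁ hY.1).comb (ih₂ hY.2)).of_eq (.ovr_distrib X Y₁ Y₂)
  | ovr => exact hY.elim
  | _ => exact hX.hasBasicForm_ovr_atom trivial

/-- Elimination: every closed DLA term is provably equal, using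
the axioms of DLA, to a basic term. -/
theorem elimination (L : DLATerm S F A V) :
    ∃ L' : DLATerm S F A V, Basic L' ∧ Eq L L' := by
  induction L with
  | comb X Y ihX ihY => exact HasBasicForm.comb ihX ihY
  | ovr X Y ihX ihY =>
    obtain ⟨X', hX', hXX'⟩ := ihX
    obtain ⟨Y', hY', hYY'⟩ := ihY
    exact (hX'.hasBasicForm_ovr hY').of_eq (.ovr_congr hXX' hYY')
  | _ => exact Basic.hasBasicForm trivial

end DLATerm
end

section
/- If L is a deterministic data linkage (represented as a finite set of atomic data linkages), then for every basic action α of data linkage dynamics, the result of applying the effect operation for α to L is again deterministic. -/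
/-!
Every atomic data linkage occupies a slot: a spot, a field of an atomic object (shared by its
field links and its partial field link), or the value of an atomic object. A data linkage is
deterministic exactly when no slot is occupied twice, i.e. when `Atomic.slot` is injective on it.
Each effect either shrinks the linkage, or clears some slots and fills them with a set of new atoms
that is a subsingleton, because in a deterministic linkage every spot, field and value lookup the
new atoms are built from has at most one candidate. Neither kind of update creates two atoms in
the same slot.
-/

open scoped Classical

inductive Atomic (S F A V : Type) : Type where
  | sLink : S → A → Atomic S F A V
  | pfLink : A → F → Atomic S F A V
  | fLink : A → F → A → Atomic S F A V
  | vAss : A → V → Atomic S F A V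
  deriving DecidableEq, Fintype

structure CState (S F A V : Type) where
  sigma : S → Option A
  zeta : A → Option (F → Option (Option A))
  xi : A → Option (Option V)

variable {S F A V : Type}

/-- Well-formedness: membership in DLR. -/
def InDLR (c : CState S F A V) : Prop :=
  (∀ a, (c.zeta a).isSome ↔ (c.xi a).isSome) ∧
  (∀ s a, c.sigma s = some a → (c.zeta a).isSome) ∧
  (∀ a g f b, c.zeta a = some g → g f = some (some b) → (c.zeta b).isSome)

noncomputable def retrieve [Fintype S] [Fintype F] [Fintype A] [Fintype V]
    [DecidableEq S] [DecidableEq F] [DecidableEq A] [DecidableEq V]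
    (c : CState S F A V) : Finset (Atomic S F A V) :=
  Finset.univ.filter (fun x => match x with
    | .sLink s a => c.sigma s = some a
    | .pfLink a f => (c.zeta a).map (fun g => g f) = some (some none)
    | .fLink a f b => (c.zeta a).map (fun g => g f) = some (some (some b))
    | .vAss a n => c.xi a = some (some n))

def Deterministic (L : Finset (Atomic S F A V)) : Prop :=
  (∀ s a b, Atomic.sLink s a ∈ L → Atomic.sLink s b ∈ L → a = b) ∧
  (∀ a f b c, Atomic.fLink a f b ∈ L → Atomic.fLink a f c ∈ L → b = c) ∧
  (∀ a f b, Atomic.fLink a f b ∈ L → Atomic.pfLink a f ∉ L) ∧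
  (∀ a n m, Atomic.vAss a n ∈ L → Atomic.vAss a m ∈ L → n = m)

/-- The basic actions of data linkage dynamics. -/
inductive Act (S F : Type) : Type where
  | getAO : S → Act S F                     -- get fresh atomic object
  | setSpot : S → S → Act S F
  | clrSpot : S → Act S F
  | eqTest : S → S → Act S F
  | undefTest : S → Act S F
  | addField : S → F → Act S F
  | rmvField : S → F → Act S F
  | hasFieldA : S → F → Act S F
  | setField : S → F → S → Act S F
  | clrField : S → F → Act S F
  | getField : S → S → F → Act S F
  | assZero : S → Act S F
  | assOne : S → Act S F
  | assAdd : S → S → S → Act S F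
  | assMul : S → S → S → Act S F
  | assNeg : S → S → Act S F
  | assInv : S → S → Act S F
  | eqValTest : S → S → Act S F
  | undefValTest : S → Act S F

section Effects

variable [Fintype S] [Fintype F] [Fintype A] [Fintype V]
variable [DecidableEq S] [DecidableEq F] [DecidableEq A] [DecidableEq V]

/-- Candidate contents of spot `s` in `L`. -/
noncomputable def spotCands (L : Finset (Atomic S F A V)) (s : S) : Finset A :=
  Finset.univ.filter (fun a => Atomic.sLink s a ∈ L)

/-- Candidate contents of field `f` of atomic object `a` in `L`. -/
noncomputable def fieldCands (L : Finset (Atomic S F A V)) (a : A) (f : F) :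
    Finset A :=
  Finset.univ.filter (fun b => Atomic.fLink a f b ∈ L)

/-- Candidate values assigned to atomic object `a` in `L`. -/
noncomputable def valCands (L : Finset (Atomic S F A V)) (a : A) : Finset V :=
  Finset.univ.filter (fun n => Atomic.vAss a n ∈ L)

/-- Spot `s` is locally deterministic in `L`. -/
def ldSpot (L : Finset (Atomic S F A V)) (s : S) : Prop :=
  (spotCands L s).card ≤ 1

/-- Field `f` of atomic object `a` is locally deterministic in `L`. -/
def ldField (L : Finset (Atomic S F A V)) (a : A) (f : F) : Prop :=
  (fieldCands L a f).card + (if Atomic.pfLink a f ∈ L then 1 else 0) ≤ 1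

/-- The value association of atomic object `a` is locally deterministic. -/
def ldVal (L : Finset (Atomic S F A V)) (a : A) : Prop :=
  (valCands L a).card ≤ 1

/-- Atomic object `a` has field `f` in `L`. -/
def hasFld (L : Finset (Atomic S F A V)) (a : A) (f : F) : Prop :=
  Atomic.pfLink a f ∈ L ∨ (fieldCands L a f).Nonempty

/-- The atomic objects occurring in `L`. -/
noncomputable def atomsOf (L : Finset (Atomic S F A V)) : Finset A :=
  L.biUnion (fun x => match x with
    | .sLink _ a => {a}
    | .pfLink a _ => {a}
    | .fLink a _ b => {a, b}
    | .vAss a _ => {a})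

/-- Remove all spot links at spot `s`. -/
noncomputable def rmSpot (L : Finset (Atomic S F A V)) (s : S) :
    Finset (Atomic S F A V) :=
  L.filter (fun x => ∀ a : A, x ≠ Atomic.sLink s a)

/-- All atomic data linkages concerning field `f` of atomic object `a`. -/
noncomputable def fieldAtoms (a : A) (f : F) : Finset (Atomic S F A V) :=
  insert (Atomic.pfLink a f) (Finset.univ.image (fun b => Atomic.fLink a f b))

/-- All value associations with atomic object `a`. -/
noncomputable def valAtoms (a : A) : Finset (Atomic S F A V) :=
  Finset.univ.image (fun n => Atomic.vAss a n)

variable [Zero V] [One V] [Add V] [Mul V] [Neg V] [Inv V]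

/-- The effect of a basic action of DLD on a data linkage (represented as a
finite set of atomic data linkages), in the set-based semantics: if a
non-locally-deterministic spot or field is involved, the effect is the
identity. The parameter `cf` is the choice function used to obtain fresh atomic
objects. -/
noncomputable def effect (cf : Finset A → A) (α : Act S F)
    (L : Finset (Atomic S F A V)) : Finset (Atomic S F A V) :=
  match α with
  | .getAO s =>
      if ldSpot L s then
        if atomsOf L = Finset.univ then L
        else rmSpot L s ∪ {Atomic.sLink s (cf (Finset.univ \ atomsOf L))}
      else L
  | .setSpot s t =>
      if ldSpot L s ∧ ldSpot L t then
        rmSpot L s ∪ (spotCands L t).image (fun a => Atomic.sLink s a)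
      else L
  | .clrSpot s => if ldSpot L s then rmSpot L s else L
  | .eqTest _ _ => L
  | .undefTest _ => L
  | .addField s f =>
      if ldSpot L s ∧ ∀ a ∈ spotCands L s, ldField L a f then
        L ∪ ((spotCands L s).filter (fun a => ¬ hasFld L a f)).image
              (fun a => Atomic.pfLink a f)
      else L
  | .rmvField s f =>
      if ldSpot L s ∧ ∀ a ∈ spotCands L s, ldField L a f then
        L \ (spotCands L s).biUnion (fun a => fieldAtoms a f)
      else L
  | .hasFieldA _ _ => L
  | .setField s f t =>
      if ldSpot L s ∧ ldSpot L t ∧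
          ∀ a ∈ spotCands L s, ldField L a f ∧ hasFld L a f then
        (L \ (spotCands L s).biUnion (fun a => fieldAtoms a f)) ∪
          (spotCands L s).biUnion (fun a =>
            if (spotCands L t).Nonempty then
              (spotCands L t).image (fun b => Atomic.fLink a f b)
            else {Atomic.pfLink a f})
      else L
  | .clrField s f =>
      if ldSpot L s ∧ ∀ a ∈ spotCands L s, ldField L a f ∧ hasFld L a f then
        (L \ (spotCands L s).biUnion (fun a => fieldAtoms a f)) ∪
          (spotCands L s).image (fun a => Atomic.pfLink a f)
      else L
  | .getField s t f =>
      if ldSpot L s ∧ ldSpot L t ∧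
          ∀ a ∈ spotCands L t, ldField L a f ∧ hasFld L a f then
        rmSpot L s ∪ (spotCands L t).biUnion (fun a =>
          (fieldCands L a f).image (fun b => Atomic.sLink s b))
      else L
  | .assZero s =>
      if ldSpot L s ∧ ∀ a ∈ spotCands L s, ldVal L a then
        (L \ (spotCands L s).biUnion valAtoms) ∪
          (spotCands L s).image (fun a => Atomic.vAss a (0 : V))
      else L
  | .assOne s =>
      if ldSpot L s ∧ ∀ a ∈ spotCands L s, ldVal L a then
        (L \ (spotCands L s).biUnion valAtoms) ∪
          (spotCands L s).image (fun a => Atomic.vAss a (1 : V))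
      else L
  | .assAdd s t u =>
      if ldSpot L s ∧ ldSpot L t ∧ ldSpot L u ∧
          (∀ a ∈ spotCands L s, ldVal L a) ∧
          (∀ a ∈ spotCands L t, ldVal L a) ∧
          (∀ a ∈ spotCands L u, ldVal L a) ∧
          (spotCands L s).Nonempty ∧
          (∃ a ∈ spotCands L t, (valCands L a).Nonempty) ∧
          (∃ a ∈ spotCands L u, (valCands L a).Nonempty) then
        (L \ (spotCands L s).biUnion valAtoms) ∪
          (spotCands L s).biUnion (fun a =>
            ((spotCands L t).biUnion (valCands L)).biUnion (fun n =>
              ((spotCands L u).biUnion (valCands L)).image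
                (fun m => Atomic.vAss a (n + m))))
      else L
  | .assMul s t u =>
      if ldSpot L s ∧ ldSpot L t ∧ ldSpot L u ∧
          (∀ a ∈ spotCands L s, ldVal L a) ∧
          (∀ a ∈ spotCands L t, ldVal L a) ∧
          (∀ a ∈ spotCands L u, ldVal L a) ∧
          (spotCands L s).Nonempty ∧
          (∃ a ∈ spotCands L t, (valCands L a).Nonempty) ∧
          (∃ a ∈ spotCands L u, (valCands L a).Nonempty) then
        (L \ (spotCands L s).biUnion valAtoms) ∪
          (spotCands L s).biUnion (fun a =>
            ((spotCands L t).biUnion (valCands L)).biUnion (fun n =>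
              ((spotCands L u).biUnion (valCands L)).image
                (fun m => Atomic.vAss a (n * m))))
      else L
  | .assNeg s t =>
      if ldSpot L s ∧ ldSpot L t ∧
          (∀ a ∈ spotCands L s, ldVal L a) ∧
          (∀ a ∈ spotCands L t, ldVal L a) ∧
          (spotCands L s).Nonempty ∧
          (∃ a ∈ spotCands L t, (valCands L a).Nonempty) then
        (L \ (spotCands L s).biUnion valAtoms) ∪
          (spotCands L s).biUnion (fun a =>
            ((spotCands L t).biUnion (valCands L)).image
              (fun n => Atomic.vAss a (-n)))
      else L
  | .assInv s t =>
      if ldSpot L s ∧ ldSpot L t ∧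
          (∀ a ∈ spotCands L s, ldVal L a) ∧
          (∀ a ∈ spotCands L t, ldVal L a) ∧
          (spotCands L s).Nonempty ∧
          (∃ a ∈ spotCands L t, (valCands L a).Nonempty) then
        (L \ (spotCands L s).biUnion valAtoms) ∪
          (spotCands L s).biUnion (fun a =>
            ((spotCands L t).biUnion (valCands L)).image
              (fun n => Atomic.vAss a n⁻¹))
      else L
  | .eqValTest _ _ => L
  | .undefValTest _ => L

end Effects

namespace Finset

theorem subsingleton_coe_image {α β : Type*} [DecidableEq β] {s : Finset α}
    (hs : (s : Set α).Subsingleton) (f : α → β) : (s.image f : Set β).Subsingleton := by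
  rw [coe_image]
  exact hs.image f

theorem subsingleton_coe_biUnion {α β : Type*} [DecidableEq β] {s : Finset α}
    {t : α → Finset β} (hs : (s : Set α).Subsingleton)
    (ht : ∀ i ∈ s, (t i : Set β).Subsingleton) : (s.biUnion t : Set β).Subsingleton := by
  intro x hx y hy
  rw [mem_coe, mem_biUnion] at hx hy
  obtain ⟨i, hi, hx⟩ := hx
  obtain ⟨j, hj, hy⟩ := hy
  obtain rfl := hs hi hj
  exact ht i hi hx hy

end Finset

theorem Set.InjOn.union_of_subsingleton {α β : Type*} {f : α → β} {s t : Set α}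
    (hs : InjOn f s) (ht : t.Subsingleton) (hst : ∀ x ∈ s, ∀ y ∈ t, f x ≠ f y) :
    InjOn f (s ∪ t) :=
  (injOn_union (disjoint_left.2 fun x hxs hxt => hst x hxs x hxt rfl)).2 ⟨hs, ht.injOn f, hst⟩

inductive Slot (S F A : Type) : Type where
  | spot : S → Slot S F A
  | field : A → F → Slot S F A
  | value : A → Slot S F A

def Atomic.slot : Atomic S F A V → Slot S F A
  | .sLink s _ => .spot s
  | .pfLink a f => .field a f
  | .fLink a f _ => .field a f
  | .vAss a _ => .value a

theorem deterministic_iff_injOn_slot {L : Finset (Atomic S F A V)} :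
    Deterministic L ↔ Set.InjOn Atomic.slot (L : Set (Atomic S F A V)) := by
  constructor
  · rintro ⟨hs, hf, hpf, hv⟩ x hx y hy hxy
    cases x <;> cases y <;> simp only [Atomic.slot, reduceCtorEq, Slot.spot.injEq,
      Slot.field.injEq, Slot.value.injEq] at hxy
    case sLink.sLink s a _ b => subst hxy; rw [hs s a b hx hy]
    case pfLink.fLink a f _ _ b => obtain ⟨rfl, rfl⟩ := hxy; exact absurd hx (hpf a f b hy)
    case fLink.pfLink a f b _ _ => obtain ⟨rfl, rfl⟩ := hxy; exact absurd hy (hpf a f b hx)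
    case pfLink.pfLink => obtain ⟨rfl, rfl⟩ := hxy; rfl
    case fLink.fLink a f b _ _ c => obtain ⟨rfl, rfl⟩ := hxy; rw [hf a f b c hx hy]
    case vAss.vAss a n _ m => subst hxy; rw [hv a n m hx hy]
  · intro h
    refine ⟨fun s a b ha hb => ?_, fun a f b c hb hc => ?_, fun a f b hb hp => ?_,
      fun a n m hn hm => ?_⟩
    · simpa using h ha hb rfl
    · simpa using h hb hc rfl
    · simpa using h hb hp rfl
    · simpa using h hn hm rfl

theorem Deterministic.union_of_subsingleton {L L' N : Finset (Atomic S F A V)}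
    [DecidableEq (Atomic S F A V)] (hL : Deterministic L) (hL' : L' ⊆ L)
    (hN : (N : Set (Atomic S F A V)).Subsingleton)
    (hne : ∀ x ∈ L', ∀ y ∈ N, x.slot ≠ y.slot) : Deterministic (L' ∪ N) := by
  rw [deterministic_iff_injOn_slot, Finset.coe_union]
  exact ((deterministic_iff_injOn_slot.1 hL).mono hL').union_of_subsingleton hN hne

theorem Deterministic.mono {L M : Finset (Atomic S F A V)} (hL : Deterministic L)
    (hML : M ⊆ L) : Deterministic M := by
  rw [deterministic_iff_injOn_slot] at hL ⊢
  exact hL.mono hML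

section

variable [DecidableEq S] [DecidableEq F] [DecidableEq A] [DecidableEq V]
variable {L N : Finset (Atomic S F A V)}

theorem mem_spotCands [Fintype A] {s : S} {a : A} :
    a ∈ spotCands L s ↔ Atomic.sLink s a ∈ L := by
  simp [spotCands]

theorem mem_fieldCands [Fintype A] {a b : A} {f : F} :
    b ∈ fieldCands L a f ↔ Atomic.fLink a f b ∈ L := by
  simp [fieldCands]

theorem mem_valCands [Fintype V] {a : A} {n : V} :
    n ∈ valCands L a ↔ Atomic.vAss a n ∈ L := by
  simp [valCands]

theorem Deterministic.subsingleton_spotCands [Fintype A] (hL : Deterministic L) (s : S) :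
    (spotCands L s : Set A).Subsingleton :=
  fun _ ha _ hb => hL.1 s _ _ (mem_spotCands.1 ha) (mem_spotCands.1 hb)

theorem Deterministic.subsingleton_fieldCands [Fintype A] (hL : Deterministic L) (a : A)
    (f : F) : (fieldCands L a f : Set A).Subsingleton :=
  fun _ hb _ hc => hL.2.1 a f _ _ (mem_fieldCands.1 hb) (mem_fieldCands.1 hc)

theorem Deterministic.subsingleton_valCands [Fintype V] (hL : Deterministic L) (a : A) :
    (valCands L a : Set V).Subsingleton :=
  fun _ hn _ hm => hL.2.2.2 a _ _ (mem_valCands.1 hn) (mem_valCands.1 hm)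

theorem Deterministic.subsingleton_biUnion_valCands [Fintype A] [Fintype V]
    (hL : Deterministic L) (t : S) :
    ((spotCands L t).biUnion (valCands L) : Set V).Subsingleton :=
  Finset.subsingleton_coe_biUnion (hL.subsingleton_spotCands t)
    fun a _ => hL.subsingleton_valCands a

theorem slot_ne_of_mem_rmSpot [Fintype A] {s : S} {x : Atomic S F A V}
    (hx : x ∈ rmSpot L s) : x.slot ≠ .spot s := by
  cases x <;> simp_all [rmSpot, Atomic.slot]

theorem slot_ne_of_mem_sdiff_fieldAtoms [Fintype A] {T : Finset A} {a : A} {f : F}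
    {x : Atomic S F A V} (hx : x ∈ L \ T.biUnion (fieldAtoms · f)) (ha : a ∈ T) :
    x.slot ≠ .field a f := by
  intro h
  cases x <;> simp_all [fieldAtoms, Atomic.slot]

theorem slot_ne_of_mem_sdiff_valAtoms [Fintype V] {T : Finset A} {a : A}
    {x : Atomic S F A V} (hx : x ∈ L \ T.biUnion valAtoms) (ha : a ∈ T) :
    x.slot ≠ .value a := by
  intro h
  cases x <;> simp_all [valAtoms, Atomic.slot]

theorem slot_ne_of_not_hasFld [Fintype A] {a : A} {f : F} {x : Atomic S F A V}
    (hx : x ∈ L) (hnf : ¬hasFld L a f) : x.slot ≠ .field a f := by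
  intro h
  cases x <;> simp_all [hasFld, Atomic.slot, Finset.Nonempty, mem_fieldCands]

theorem Deterministic.rmSpot_union [Fintype A] {s : S} (hL : Deterministic L)
    (hN : (N : Set (Atomic S F A V)).Subsingleton) (hNs : ∀ y ∈ N, y.slot = .spot s) :
    Deterministic (rmSpot L s ∪ N) :=
  hL.union_of_subsingleton (Finset.filter_subset _ _) hN
    fun _ hx y hy => hNs y hy ▸ slot_ne_of_mem_rmSpot hx

theorem Deterministic.sdiff_fieldAtoms_union [Fintype A] {T : Finset A} {f : F}
    (hL : Deterministic L) (hN : (N : Set (Atomic S F A V)).Subsingleton)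
    (hNs : ∀ y ∈ N, ∃ a ∈ T, y.slot = .field a f) :
    Deterministic ((L \ T.biUnion (fieldAtoms · f)) ∪ N) :=
  hL.union_of_subsingleton Finset.sdiff_subset hN fun _ hx y hy => by
    obtain ⟨a, ha, hy⟩ := hNs y hy
    exact hy ▸ slot_ne_of_mem_sdiff_fieldAtoms hx ha

theorem Deterministic.sdiff_valAtoms_union [Fintype V] {T : Finset A}
    (hL : Deterministic L) (hN : (N : Set (Atomic S F A V)).Subsingleton)
    (hNs : ∀ y ∈ N, ∃ a ∈ T, y.slot = .value a) :
    Deterministic ((L \ T.biUnion valAtoms) ∪ N) :=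
  hL.union_of_subsingleton Finset.sdiff_subset hN fun _ hx y hy => by
    obtain ⟨a, ha, hy⟩ := hNs y hy
    exact hy ▸ slot_ne_of_mem_sdiff_valAtoms hx ha

theorem Deterministic.union_pfLinks_of_not_hasFld [Fintype A] {T : Finset A} {f : F}
    (hL : Deterministic L) (hT : (T : Set A).Subsingleton) :
    Deterministic (L ∪ (T.filter (¬hasFld L · f)).image (Atomic.pfLink · f)) := by
  have hT' : (T.filter (¬hasFld L · f) : Set A).Subsingleton :=
    hT.anti (Finset.coe_subset.2 (Finset.filter_subset _ _))
  refine hL.union_of_subsingleton subset_rfl (Finset.subsingleton_coe_image hT' _)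
    fun x hx y hy => ?_
  obtain ⟨a, ha, rfl⟩ := Finset.mem_image.1 hy
  exact slot_ne_of_not_hasFld hx (Finset.mem_filter.1 ha).2

theorem Deterministic.rmSpot_union_image_sLink [Fintype A] {s : S} {T : Finset A}
    (hL : Deterministic L) (hT : (T : Set A).Subsingleton) :
    Deterministic (rmSpot L s ∪ T.image (Atomic.sLink s)) :=
  hL.rmSpot_union (Finset.subsingleton_coe_image hT _) (by grind [Atomic.slot])

theorem Deterministic.sdiff_fieldAtoms_union_image_pfLink [Fintype A] {T : Finset A} {f : F}
    (hL : Deterministic L) (hT : (T : Set A).Subsingleton) :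
    Deterministic ((L \ T.biUnion (fieldAtoms · f)) ∪ T.image (Atomic.pfLink · f)) :=
  hL.sdiff_fieldAtoms_union (Finset.subsingleton_coe_image hT _) (by grind [Atomic.slot])

theorem Deterministic.sdiff_fieldAtoms_union_biUnion_fLink [Fintype A] {T U : Finset A}
    {f : F} (hL : Deterministic L) (hT : (T : Set A).Subsingleton)
    (hU : (U : Set A).Subsingleton) :
    Deterministic ((L \ T.biUnion (fieldAtoms · f)) ∪ T.biUnion fun a =>
      U.image (Atomic.fLink a f)) :=
  hL.sdiff_fieldAtoms_union
    (Finset.subsingleton_coe_biUnion hT fun _ _ => Finset.subsingleton_coe_image hU _)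
    (by grind [Atomic.slot])

theorem Deterministic.assignConst [Fintype A] [Fintype V] (hL : Deterministic L) (s : S)
    (c : V) :
    Deterministic ((L \ (spotCands L s).biUnion valAtoms) ∪
      (spotCands L s).image (Atomic.vAss · c)) :=
  hL.sdiff_valAtoms_union (Finset.subsingleton_coe_image (hL.subsingleton_spotCands s) _)
    (by grind [Atomic.slot])

theorem Deterministic.assignUnop [Fintype A] [Fintype V] (hL : Deterministic L)
    (op : V → V) (s t : S) :
    Deterministic ((L \ (spotCands L s).biUnion valAtoms) ∪
      (spotCands L s).biUnion fun a =>
        ((spotCands L t).biUnion (valCands L)).image fun n => Atomic.vAss a (op n)) :=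
  hL.sdiff_valAtoms_union
    (Finset.subsingleton_coe_biUnion (hL.subsingleton_spotCands s) fun _ _ =>
      Finset.subsingleton_coe_image (hL.subsingleton_biUnion_valCands t) _)
    (by grind [Atomic.slot])

theorem Deterministic.assignBinop [Fintype A] [Fintype V] (hL : Deterministic L)
    (op : V → V → V) (s t u : S) :
    Deterministic ((L \ (spotCands L s).biUnion valAtoms) ∪
      (spotCands L s).biUnion fun a =>
        ((spotCands L t).biUnion (valCands L)).biUnion fun n =>
          ((spotCands L u).biUnion (valCands L)).image fun m => Atomic.vAss a (op n m)) :=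
  hL.sdiff_valAtoms_union
    (Finset.subsingleton_coe_biUnion (hL.subsingleton_spotCands s) fun _ _ =>
      Finset.subsingleton_coe_biUnion (hL.subsingleton_biUnion_valCands t) fun _ _ =>
        Finset.subsingleton_coe_image (hL.subsingleton_biUnion_valCands u) _)
    (by grind [Atomic.slot])

end

section Effects

variable [Fintype S] [Fintype F] [Fintype A] [Fintype V]
variable [DecidableEq S] [DecidableEq F] [DecidableEq A] [DecidableEq V]
variable [Zero V] [One V] [Add V] [Mul V] [Neg V] [Inv V]

/-- the effect operations of the basic actions of data linkage
dynamics preserve determinism of data linkages. -/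
theorem effect_preserves_deterministic (cf : Finset A → A) (α : Act S F)
    (L : Finset (Atomic S F A V)) (hL : Deterministic L) :
    Deterministic (effect cf α L) := by
  have hS := hL.subsingleton_spotCands
  cases α <;> simp only [effect]
  case getAO s =>
    split_ifs
    exacts [hL, hL.rmSpot_union (by simp) (by simp [Atomic.slot]), hL]
  case setSpot s t => split_ifs; exacts [hL.rmSpot_union_image_sLink (hS t), hL]
  case getField s t f =>
    split_ifs
    · rw [← Finset.biUnion_image]
      exact hL.rmSpot_union_image_sLink
        (Finset.subsingleton_coe_biUnion (hS t) fun a _ => hL.subsingleton_fieldCands a f)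
    · exact hL
  case clrSpot s => split_ifs; exacts [hL.mono (Finset.filter_subset _ _), hL]
  case addField s f => split_ifs; exacts [hL.union_pfLinks_of_not_hasFld (hS s), hL]
  case rmvField s f => split_ifs; exacts [hL.mono Finset.sdiff_subset, hL]
  case setField s f t =>
    split_ifs
    · exact hL.sdiff_fieldAtoms_union_biUnion_fLink (hS s) (hS t)
    · rw [Finset.biUnion_singleton]
      exact hL.sdiff_fieldAtoms_union_image_pfLink (hS s)
    · exact hL
  case clrField s f => split_ifs; exacts [hL.sdiff_fieldAtoms_union_image_pfLink (hS s), hL]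
  case assZero s => split_ifs; exacts [hL.assignConst s 0, hL]
  case assOne s => split_ifs; exacts [hL.assignConst s 1, hL]
  case assAdd s t u => split_ifs; exacts [hL.assignBinop (· + ·) s t u, hL]
  case assMul s t u => split_ifs; exacts [hL.assignBinop (· * ·) s t u, hL]
  case assNeg s t => split_ifs; exacts [hL.assignUnop (- ·) s t, hL]
  case assInv s t => split_ifs; exacts [hL.assignUnop (·⁻¹) s t, hL]
  case eqTest | undefTest | hasFieldA | eqValTest | undefValTest => exact hL

end Effects
end

section
/- The retrieve function is surjective onto deterministic data linkages: for every deterministic data linkage L there exists a concrete state (σ, ζ, ξ) in DLR such that L = retrieve(σ, ζ, ξ). -/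
open scoped Classical

variable {S F A V : Type}

/-!
Read the state off the linkage: the atomic objects occurring in `L` form the common domain
of `ζ` and `ξ`, which makes the state well formed, and a spot, field or value is defined exactly
when `L` carries a link for it. Determinism makes that link the only candidate, so `retrieve`
gives back exactly `L`.
-/

section OptionOf

variable {β : Type*}

noncomputable def optionOf (p : β → Prop) : Option β :=
  if h : ∃ b, p b then some h.choose else none

theorem optionOf_spec {p : β → Prop} {b : β} (h : optionOf p = some b) : p b := by
  unfold optionOf at h
  split_ifs at h with hex
  exact Option.some_inj.mp h ▸ hex.choose_spec

theorem optionOf_eq_some_iff {p : β → Prop} (hp : ∀ b c, p b → p c → b = c) {b : β} :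
    optionOf p = some b ↔ p b := by
  refine ⟨optionOf_spec, fun hb => ?_⟩
  have hex : ∃ b, p b := ⟨b, hb⟩
  rw [optionOf, dif_pos hex, hp _ _ hex.choose_spec hb]

end OptionOf

def Atomic.Mentions : Atomic S F A V → A → Prop
  | .sLink _ a, c => c = a
  | .pfLink a _, c => c = a
  | .fLink a _ b, c => c = a ∨ c = b
  | .vAss a _, c => c = a

namespace CState

noncomputable def fieldsOf (L : Finset (Atomic S F A V)) (a : A) : F → Option (Option A) :=
  fun f => if .pfLink a f ∈ L then some none else (optionOf fun b => .fLink a f b ∈ L).map some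

noncomputable def ofLinkage (L : Finset (Atomic S F A V)) : CState S F A V where
  sigma s := optionOf fun a => .sLink s a ∈ L
  zeta a := if ∃ x ∈ L, x.Mentions a then some (fieldsOf L a) else none
  xi a := if ∃ x ∈ L, x.Mentions a then some (optionOf fun v => .vAss a v ∈ L) else none

variable {L : Finset (Atomic S F A V)}

theorem fieldsOf_eq_partial_iff {a : A} {f : F} : fieldsOf L a f = some none ↔ .pfLink a f ∈ L := by
  by_cases h : Atomic.pfLink a f ∈ L <;> simp [fieldsOf, h]

theorem fLink_mem_of_fieldsOf_eq {a b : A} {f : F} (h : fieldsOf L a f = some (some b)) :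
    .fLink a f b ∈ L := by
  unfold fieldsOf at h
  split_ifs at h
  · simp at h
  simp only [Option.map_eq_some_iff, Option.some_inj, exists_eq_right] at h
  exact optionOf_spec (p := fun b => Atomic.fLink a f b ∈ L) h

theorem fieldsOf_eq_field_iff (hL : Deterministic L) {a b : A} {f : F} :
    fieldsOf L a f = some (some b) ↔ .fLink a f b ∈ L := by
  refine ⟨fLink_mem_of_fieldsOf_eq, fun h => ?_⟩
  rw [fieldsOf, if_neg (hL.2.2.1 a f b h), (optionOf_eq_some_iff (hL.2.1 a f)).mpr h, Option.map_some]

theorem ofLinkage_zeta_of_mentions {a : A} {x : Atomic S F A V} (hx : x ∈ L) (ha : x.Mentions a) :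
    (ofLinkage L).zeta a = some (fieldsOf L a) :=
  if_pos ⟨x, hx, ha⟩

theorem ofLinkage_zeta_eq_some {a : A} {g : F → Option (Option A)}
    (h : (ofLinkage L).zeta a = some g) : (∃ x ∈ L, x.Mentions a) ∧ fieldsOf L a = g := by
  simp only [ofLinkage] at h
  split_ifs at h with ha
  exact ⟨ha, Option.some_inj.mp h⟩

theorem inDLR_ofLinkage (L : Finset (Atomic S F A V)) : InDLR (ofLinkage L) := by
  refine ⟨fun a => ?_, fun s a hsa => ?_, fun a g f b hg hgf => ?_⟩
  · by_cases ha : ∃ x ∈ L, x.Mentions a <;> simp [ofLinkage, ha]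
  · have hs : Atomic.sLink s a ∈ L :=
      optionOf_spec (p := fun b => Atomic.sLink s b ∈ L) hsa
    simp [ofLinkage_zeta_of_mentions hs rfl]
  · obtain ⟨-, rfl⟩ := ofLinkage_zeta_eq_some hg
    simp [ofLinkage_zeta_of_mentions (fLink_mem_of_fieldsOf_eq hgf) (Or.inr rfl)]

theorem ofLinkage_zeta_map_eq_iff {a : A} {f : F} {o : Option (Option A)}
    (hfields : fieldsOf L a f = o → ∃ x ∈ L, x.Mentions a) :
    ((ofLinkage L).zeta a).map (fun g => g f) = some o ↔ fieldsOf L a f = o := by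
  constructor
  · intro h
    obtain ⟨g, hg, rfl⟩ := Option.map_eq_some_iff.mp h
    exact (ofLinkage_zeta_eq_some hg).2 ▸ rfl
  · intro h
    obtain ⟨x, hx, ha⟩ := hfields h
    rw [ofLinkage_zeta_of_mentions hx ha, Option.map_some, h]

theorem ofLinkage_xi_eq_some_iff (hL : Deterministic L) {a : A} {v : V} :
    (ofLinkage L).xi a = some (some v) ↔ .vAss a v ∈ L := by
  constructor
  · intro h
    simp only [ofLinkage] at h
    split_ifs at h
    exact optionOf_spec (p := fun v => .vAss a v ∈ L) (Option.some_inj.mp h)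
  · intro h
    simp only [ofLinkage, if_pos (⟨_, h, rfl⟩ : ∃ x ∈ L, x.Mentions a),
      (optionOf_eq_some_iff (hL.2.2.2 a)).mpr h]

theorem retrieve_ofLinkage [Fintype S] [Fintype F] [Fintype A] [Fintype V]
    [DecidableEq S] [DecidableEq F] [DecidableEq A] [DecidableEq V] (hL : Deterministic L) :
    retrieve (ofLinkage L) = L := by
  ext x
  cases x with
  | sLink s a => simpa [retrieve, ofLinkage] using optionOf_eq_some_iff (hL.1 s)
  | pfLink a f =>
    simpa [retrieve, ← fieldsOf_eq_partial_iff] using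
      ofLinkage_zeta_map_eq_iff fun h => ⟨_, fieldsOf_eq_partial_iff.mp h, rfl⟩
  | fLink a f b =>
    simpa [retrieve, ← fieldsOf_eq_field_iff hL] using
      ofLinkage_zeta_map_eq_iff fun h => ⟨_, fLink_mem_of_fieldsOf_eq h, Or.inl rfl⟩
  | vAss a v => simpa [retrieve] using ofLinkage_xi_eq_some_iff hL

end CState

/-- the retrieve function is surjective onto deterministic data
linkages: every deterministic data linkage is `retrieve` of some concrete state
in DLR. -/
theorem retrieve_surjective_onto_deterministic
    [Fintype S] [Fintype F] [Fintype A] [Fintype V]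
    [DecidableEq S] [DecidableEq F] [DecidableEq A] [DecidableEq V]
    (L : Finset (Atomic S F A V)) (hL : Deterministic L) :
    ∃ c : CState S F A V, InDLR c ∧ L = retrieve c :=
  ⟨CState.ofLinkage L, CState.inDLR_ofLinkage L, (CState.retrieve_ofLinkage hL).symm⟩
end

section
/- In a concrete state (σ, ζ, ξ), full garbage collection restricted to the reachable atomic objects yields a valid concrete state: if (σ, ζ, ξ) ∈ DLR, then (σ, ζ restricted to reach(σ,ζ), ξ restricted to reach(σ,ζ)) ∈ DLR, where reach(σ,ζ) is the set of atomic objects reachable from the range of σ by following field links of ζ. -/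
open scoped Classical

variable {S F A V : Type}

/-- Reachability from an atomic object through defined field links of `zeta`. -/
inductive ReachFrom (zeta : A → Option (F → Option (Option A))) (a : A) : A → Prop where
  | refl : ReachFrom zeta a a
  | step {b c : A} (f : F) (g : F → Option (Option A)) :
      ReachFrom zeta a b → zeta b = some g → g f = some (some c) →
      ReachFrom zeta a c

/-- Atomic objects reachable from the contents of the spots. -/
def reachS (sigma : S → Option A) (zeta : A → Option (F → Option (Option A))) :
    Set A :=
  {b | ∃ s a, sigma s = some a ∧ ReachFrom zeta a b}

noncomputable def restrZ (zeta : A → Option (F → Option (Option A)))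
    (A' : Set A) : A → Option (F → Option (Option A)) :=
  fun a => if a ∈ A' then zeta a else none

noncomputable def restrX (xi : A → Option (Option V)) (A' : Set A) :
    A → Option (Option V) :=
  fun a => if a ∈ A' then xi a else none

/-- Effect of full garbage collection on concrete states. -/
noncomputable def effFgc (c : CState S F A V) : CState S F A V :=
  ⟨c.sigma, restrZ c.zeta (reachS c.sigma c.zeta),
    restrX c.xi (reachS c.sigma c.zeta)⟩

/-- Atomic objects occurring in a cycle of field links. -/
def incycle (zeta : A → Option (F → Option (Option A))) : Set A :=
  {a | (zeta a).isSome ∧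
    ∃ g f b, zeta a = some g ∧ g f = some (some b) ∧ ReachFrom zeta b a}

/-- Effect of restricted garbage collection on concrete states. -/
noncomputable def effRgc (c : CState S F A V) : CState S F A V :=
  ⟨c.sigma, restrZ c.zeta (reachS c.sigma c.zeta ∪ incycle c.zeta),
    restrX c.xi (reachS c.sigma c.zeta ∪ incycle c.zeta)⟩

/-- Safe disposal of an atomic object: remove it from the domains of `zeta`
and `xi` if it is unreachable, otherwise do nothing. -/
noncomputable def sd [DecidableEq A] (a : A) (c : CState S F A V) :
    CState S F A V :=
  if a ∈ reachS c.sigma c.zeta then c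
  else ⟨c.sigma, Function.update c.zeta a none, Function.update c.xi a none⟩

/-- Clear every spot whose content is `a`. -/
noncomputable def clrs (a : A) (sigma : S → Option A) : S → Option A :=
  fun s => if sigma s = some a then none else sigma s

/-- Clear (set to ⊥) every field whose content is `a`. -/
noncomputable def clrf (a : A) (zeta : A → Option (F → Option (Option A))) :
    A → Option (F → Option (Option A)) :=
  fun a' => (zeta a').map (fun g f => if g f = some (some a) then some none else g f)

/-- Unsafe disposal of an atomic object. -/
noncomputable def ud [DecidableEq A] (a : A) (c : CState S F A V) :
    CState S F A V :=
  sd a ⟨clrs a c.sigma, clrf a c.zeta, c.xi⟩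

theorem restrZ_eq_some_iff {zeta : A → Option (F → Option (Option A))} {A' : Set A} {a : A}
    {g : F → Option (Option A)} : restrZ zeta A' a = some g ↔ a ∈ A' ∧ zeta a = some g := by
  unfold restrZ
  split_ifs with ha <;> simp [ha]

theorem isSome_restrZ_iff {zeta : A → Option (F → Option (Option A))} {A' : Set A} {a : A} :
    (restrZ zeta A' a).isSome ↔ a ∈ A' ∧ (zeta a).isSome := by
  unfold restrZ
  split_ifs with ha <;> simp [ha]

theorem isSome_restrX_iff {xi : A → Option (Option V)} {A' : Set A} {a : A} :
    (restrX xi A' a).isSome ↔ a ∈ A' ∧ (xi a).isSome := by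
  unfold restrX
  split_ifs with ha <;> simp [ha]

theorem InDLR.restrict {c : CState S F A V} (hc : InDLR c) {A' : Set A}
    (hsigma : ∀ s a, c.sigma s = some a → a ∈ A')
    (hlink : ∀ a g f b, a ∈ A' → c.zeta a = some g → g f = some (some b) → b ∈ A') :
    InDLR ⟨c.sigma, restrZ c.zeta A', restrX c.xi A'⟩ := by
  obtain ⟨hdom, hspot, hfield⟩ := hc
  refine ⟨fun a => ?_, fun s a hsa => ?_, fun a g f b hag hgf => ?_⟩
  · simp only [isSome_restrZ_iff, isSome_restrX_iff, hdom a]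
  · exact isSome_restrZ_iff.2 ⟨hsigma s a hsa, hspot s a hsa⟩
  · obtain ⟨ha, hag⟩ := restrZ_eq_some_iff.1 hag
    exact isSome_restrZ_iff.2 ⟨hlink a g f b ha hag hgf, hfield a g f b hag hgf⟩

theorem mem_reachS_of_sigma {sigma : S → Option A} {zeta : A → Option (F → Option (Option A))}
    {s : S} {a : A} (hsa : sigma s = some a) : a ∈ reachS sigma zeta :=
  ⟨s, a, hsa, .refl⟩

theorem mem_reachS_of_link {sigma : S → Option A} {zeta : A → Option (F → Option (Option A))}
    {a b : A} {g : F → Option (Option A)} {f : F} (ha : a ∈ reachS sigma zeta)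
    (hag : zeta a = some g) (hgf : g f = some (some b)) : b ∈ reachS sigma zeta :=
  let ⟨s, r, hsr, hra⟩ := ha
  ⟨s, r, hsr, .step f g hra hag hgf⟩

/-- full garbage collection (restriction of `zeta` and `xi` to the
reachable atomic objects) yields a valid concrete state. -/
theorem effFgc_mem_DLR (c : CState S F A V) (hc : InDLR c) :
    InDLR (effFgc c) :=
  hc.restrict (fun _ _ => mem_reachS_of_sigma)
    (fun _ _ _ _ ha hag hgf => mem_reachS_of_link ha hag hgf)
end

section
/- Unsafe disposal of an atomic object a always removes a: for every concrete state (σ,ζ,ξ) ∈ DLR and every a ∈ AtObj, a is not in the domain of the ζ-component of ud(a,(σ,ζ,ξ)), where ud(a,(σ,ζ,ξ)) = sd(a, (clrs(a,σ), clrf(a,ζ), ξ)), clrs(a,σ) sets to ⊥ every spot whose content is a, clrf(a,ζ) sets to ⊥ every field whose content is a, and sd(a,·) removes a from the domains of ζ and ξ when a is unreachable. -/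
open scoped Classical

variable {S F A V : Type}

/-! After clearing, no field holds `a`, so a path of field links can only end at `a` if it
is empty; and no spot holds `a` either, so `a` is unreachable and `sd` removes it. -/

theorem clrf_apply_ne_of_eq_some {a b : A} {zeta : A → Option (F → Option (Option A))}
    {g : F → Option (Option A)} (hg : clrf a zeta b = some g) (f : F) :
    g f ≠ some (some a) := by
  obtain ⟨g₀, -, rfl⟩ := Option.map_eq_some_iff.mp hg
  by_cases h : g₀ f = some (some a) <;> simp [h]

theorem ReachFrom.eq_of_clrf {a b : A} {zeta : A → Option (F → Option (Option A))}
    (h : ReachFrom (clrf a zeta) b a) : b = a := by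
  cases h with
  | refl => rfl
  | step f g _ hz hg => exact absurd hg (clrf_apply_ne_of_eq_some hz f)

theorem clrs_ne_some_self (a : A) (sigma : S → Option A) (s : S) :
    clrs a sigma s ≠ some a := by
  unfold clrs
  split_ifs with h
  · exact (Option.some_ne_none a).symm
  · exact h

theorem notMem_reachS_clrs_clrf (a : A) (sigma : S → Option A)
    (zeta : A → Option (F → Option (Option A))) :
    a ∉ reachS (clrs a sigma) (clrf a zeta) := by
  rintro ⟨s, b, hs, hr⟩
  obtain rfl := hr.eq_of_clrf
  exact clrs_ne_some_self b sigma s hs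

theorem sd_zeta_self_of_notMem_reachS [DecidableEq A] {a : A} {c : CState S F A V}
    (ha : a ∉ reachS c.sigma c.zeta) : (sd a c).zeta a = none := by
  simp [sd, ha]

theorem ud_removes_general [DecidableEq A] (c : CState S F A V) (a : A) :
    (ud a c).zeta a = none :=
  sd_zeta_self_of_notMem_reachS (notMem_reachS_clrs_clrf a c.sigma c.zeta)

/-- unsafe disposal of an atomic object `a` always removes `a`
from the domain of the `zeta`-component. -/
theorem ud_removes [DecidableEq A] (c : CState S F A V) (hc : InDLR c) (a : A) :
    (ud a c).zeta a = none :=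
  ud_removes_general c a
end

section
/- The get-fresh-atomic-object effect on concrete states produces a fresh object not previously in use and preserves the well-formedness invariant: if (σ,ζ,ξ) ∈ DLR and dom(ζ) ⊊ AtObj, then letting a = cf(AtObj \ dom(ζ)), the state (σ ⊕ {s ↦ a}, ζ ⊕ {a ↦ ∅}, ξ ⊕ {a ↦ ⊥}) is in DLR, a ∉ dom(ζ), and a is the content of s in the new state. -/
open scoped Classical

variable {S F A V : Type}

/-- The domain of the `zeta`-component, as a finset. -/
noncomputable def domZ [Fintype A] (c : CState S F A V) : Finset A :=
  Finset.univ.filter (fun a => (c.zeta a).isSome)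

theorem mem_domZ [Fintype A] {c : CState S F A V} {a : A} :
    a ∈ domZ c ↔ (c.zeta a).isSome := by
  simp [domZ]

namespace InDLR

variable {c : CState S F A V}

/-- The new record has no field links, and the domain of `zeta` only grows. -/
theorem update_empty [DecidableEq A] (hc : InDLR c) (a : A) :
    InDLR ⟨c.sigma, Function.update c.zeta a (some fun _ => none),
      Function.update c.xi a (some none)⟩ := by
  obtain ⟨hdom, hspot, hfield⟩ := hc
  have dom_grows : ∀ b, (c.zeta b).isSome →
      (Function.update c.zeta a (some fun _ => none) b).isSome := by
    intro b hb
    by_cases hba : b = a <;> simp [Function.update, hba, hb]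
  refine ⟨fun b => ?_, fun t b hb => dom_grows b (hspot t b hb), fun b g f d hbg hgf => ?_⟩
  · dsimp only
    by_cases hba : b = a <;> simp [Function.update, hba, hdom b]
  · dsimp only at hbg ⊢
    by_cases hba : b = a
    · subst hba
      simp only [Function.update_self, Option.some.injEq] at hbg
      simp [← hbg] at hgf
    · rw [Function.update_of_ne hba] at hbg
      exact dom_grows d (hfield b g f d hbg hgf)

theorem update_sigma [DecidableEq S] (hc : InDLR c) (s : S) {a : A}
    (ha : (c.zeta a).isSome) :
    InDLR ⟨Function.update c.sigma s (some a), c.zeta, c.xi⟩ := by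
  obtain ⟨hdom, hspot, hfield⟩ := hc
  refine ⟨hdom, fun t b hb => ?_, hfield⟩
  by_cases hts : t = s
  · subst hts
    simp only [Function.update_self, Option.some.injEq] at hb
    exact hb ▸ ha
  · exact hspot t b (by simpa [Function.update_of_ne hts] using hb)

end InDLR

theorem getatobj_fresh_general [Fintype A] [DecidableEq A] [DecidableEq S]
    (cf : (B : Finset A) → B.Nonempty → A) (hcf : ∀ B h, cf B h ∈ B)
    (c : CState S F A V) (hc : InDLR c) (s : S)
    (hne : (Finset.univ \ domZ c).Nonempty) :
    ∀ a, a = cf (Finset.univ \ domZ c) hne →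
      InDLR ⟨Function.update c.sigma s (some a),
             Function.update c.zeta a (some (fun _ => none)),
             Function.update c.xi a (some none)⟩ ∧
      c.zeta a = none ∧
      Function.update c.sigma s (some a) s = some a := by
  rintro a rfl
  have hfresh : c.zeta (cf _ hne) = none := by
    simpa [mem_domZ] using hcf _ hne
  exact ⟨(hc.update_empty _).update_sigma s (by simp), hfresh, Function.update_self ..⟩

/-- if not all atomic objects are in use, then the
get-fresh-atomic-object effect produces a fresh object `a = cf(AtObj \ dom ζ)`
not previously in use, makes it the content of spot `s`, and the resulting
state is again in DLR. -/
theorem getatobj_fresh [Fintype A] [DecidableEq A] [DecidableEq S]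
    (cf : (B : Finset A) → B.Nonempty → A) (hcf : ∀ B h, cf B h ∈ B)
    (c : CState S F A V) (hc : InDLR c) (s : S)
    (hlt : domZ c ⊂ Finset.univ)
    (hne : (Finset.univ \ domZ c).Nonempty) :
    ∀ a, a = cf (Finset.univ \ domZ c) hne →
      InDLR ⟨Function.update c.sigma s (some a),
             Function.update c.zeta a (some (fun _ => none)),
             Function.update c.xi a (some none)⟩ ∧
      c.zeta a = none ∧
      Function.update c.sigma s (some a) s = some a :=
  getatobj_fresh_general cf hcf c hc s hne
end

section
/- The data linkage overriding combination with a spot link on the representation side corresponds to function override in a way compatible with determinism: for any (σ,ζ,ξ) ∈ DLR, spot s, and a ∈ dom(ζ), retrieve(σ,ζ,ξ) ⊘ (s=a) = retrieve(σ ⊕ {s ↦ a}, ζ, ξ), where L ⊘ (s=a) denotes removing all spot links at s from L and adding s=a. -/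
open scoped Classical

variable {S F A V : Type}

/-- Overriding combination of a data linkage (as a finite set) with a single
spot link `s = a`: remove all spot links at `s` and add `s = a`. -/
noncomputable def ovrSpot [Fintype S] [Fintype F] [Fintype A] [Fintype V]
    [DecidableEq S] [DecidableEq F] [DecidableEq A] [DecidableEq V]
    (L : Finset (Atomic S F A V)) (s : S) (a : A) : Finset (Atomic S F A V) :=
  (L.filter (fun x => ∀ b : A, x ≠ Atomic.sLink s b)) ∪ {Atomic.sLink s a}

section

variable [Fintype S] [Fintype F] [Fintype A] [Fintype V]
    [DecidableEq S] [DecidableEq F] [DecidableEq A] [DecidableEq V]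

theorem mem_ovrSpot {L : Finset (Atomic S F A V)} {s : S} {a : A} {x : Atomic S F A V} :
    x ∈ ovrSpot L s a ↔ (x ∈ L ∧ ∀ b, x ≠ .sLink s b) ∨ x = .sLink s a := by
  simp only [ovrSpot, Finset.mem_union, Finset.mem_filter, Finset.mem_singleton]

theorem sLink_mem_ovrSpot {L : Finset (Atomic S F A V)} {s t : S} {a b : A} :
    .sLink t b ∈ ovrSpot L s a ↔ if t = s then b = a else .sLink t b ∈ L := by
  split_ifs with hts
  · subst hts
    simp [mem_ovrSpot]
  · simp [mem_ovrSpot, hts]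

theorem mem_ovrSpot_of_ne_sLink {L : Finset (Atomic S F A V)} {s : S} {a : A}
    {x : Atomic S F A V} (hx : ∀ b, x ≠ .sLink s b) : x ∈ ovrSpot L s a ↔ x ∈ L := by
  simp [mem_ovrSpot, hx]

theorem sLink_mem_retrieve {c : CState S F A V} {t : S} {b : A} :
    .sLink t b ∈ retrieve c ↔ c.sigma t = some b := by
  simp [retrieve]

theorem mem_retrieve_mk_iff_of_ne_sLink (c : CState S F A V) (σ : S → Option A)
    {x : Atomic S F A V} (hx : ∀ t b, x ≠ .sLink t b) :
    x ∈ retrieve ⟨σ, c.zeta, c.xi⟩ ↔ x ∈ retrieve c := by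
  cases x with
  | sLink t b => exact absurd rfl (hx t b)
  | _ => simp [retrieve]

end

theorem ovrSpot_retrieve_general [Fintype S] [Fintype F] [Fintype A] [Fintype V]
    [DecidableEq S] [DecidableEq F] [DecidableEq A] [DecidableEq V]
    (c : CState S F A V) (s : S) (a : A) :
    ovrSpot (retrieve c) s a =
      retrieve ⟨Function.update c.sigma s (some a), c.zeta, c.xi⟩ := by
  ext x
  by_cases hx : ∃ t b, x = .sLink t b
  · obtain ⟨t, b, rfl⟩ := hx
    rw [sLink_mem_ovrSpot, sLink_mem_retrieve, sLink_mem_retrieve]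
    dsimp only
    rw [Function.update_apply]
    split_ifs
    · rw [Option.some_inj, eq_comm]
    · rfl
  · simp only [not_exists] at hx
    rw [mem_ovrSpot_of_ne_sLink (hx s)]
    exact (mem_retrieve_mk_iff_of_ne_sLink c _ hx).symm

/-- data linkage overriding combination with a spot link
corresponds to function override on the representation side. -/
theorem ovrSpot_retrieve [Fintype S] [Fintype F] [Fintype A] [Fintype V]
    [DecidableEq S] [DecidableEq F] [DecidableEq A] [DecidableEq V]
    (c : CState S F A V) (hc : InDLR c) (s : S) (a : A)
    (ha : (c.zeta a).isSome) :
    ovrSpot (retrieve c) s a =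
      retrieve ⟨Function.update c.sigma s (some a), c.zeta, c.xi⟩ :=
  ovrSpot_retrieve_general c s a
end
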